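/- For natural numbers n ≥ 1 and k ≤ n, the evaluation of the k-th elementary symmetric polynomial in n variables at the powers 1, q, q^2, ..., q^(n-1) equals q^(k(k-1)/2) times the Gaussian binomial coefficient: e_{k,n}(1, q, q^2, ..., q^(n-1)) = q^(k(k-1)/2) · binom(n,k)_q in ℤ[q]. -/
import Mathlib

set_option synthInstance.maxHeartbeats 1000000
set_option maxHeartbeats 1000000

open Finset Polynomial


/-!
`e_{k,n}(1, q, q², ..., q^(n-1)) = q^(k(k-1)/2) ⬝ binom(n,k)_q` in `ℤ[q]`.

The Gaussian binomial coefficient is characterized by its defining formula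
`binom(n,k)_q = [n]!_q / ([n-k]!_q ⬝ [k]!_q)` in the fraction field `ℚ(q)` of `ℤ[q]`;
we quantify over any family `B : ℕ → ℕ → ℤ[q]` satisfying this property.
The k-th elementary symmetric polynomial evaluated at `1, q, ..., q^(n-1)` is
`∑_{s ⊆ {0,...,n-1}, |s| = k} ∏_{i ∈ s} q^i`.
-/

/-- The image of the variable `q` in the fraction field of `ℤ[q]`. -/
noncomputable def qq : FractionRing (Polynomial ℤ) :=
  algebraMap (Polynomial ℤ) (FractionRing (Polynomial ℤ)) Polynomial.X

/-- The q-bracket `[n]_q = 1 + q + ... + q^(n-1)`. -/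
noncomputable def qBracket (n : ℕ) : FractionRing (Polynomial ℤ) :=
  ∑ i ∈ Finset.range n, qq ^ i

/-- The q-factorial `[n]!_q = [1]_q ⬝ [2]_q ⬝ ... ⬝ [n]_q`. -/
noncomputable def qFactorial (n : ℕ) : FractionRing (Polynomial ℤ) :=
  ∏ i ∈ Finset.range n, qBracket (i + 1)

noncomputable abbrev φ : Polynomial ℤ →+* FractionRing (Polynomial ℤ) :=
  (algebraMap (Polynomial ℤ) (FractionRing (Polynomial ℤ)))

noncomputable def E (n k : ℕ) : Polynomial ℤ :=
  ∑ s ∈ (Finset.range n).powersetCard k, ∏ i ∈ s, (Polynomial.X : Polynomial ℤ) ^ i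

lemma E_zero (n : ℕ) : E n 0 = 1 := by simp [E]

lemma E_gt (n k : ℕ) (h : n < k) : E n k = 0 := by
  rw [E, Finset.powersetCard_eq_empty.2 (by simpa using h), Finset.sum_empty]

lemma E_succ (n k : ℕ) : E (n+1) (k+1) = E n (k+1) + X ^ n * E n k := by
  have hn : n ∉ Finset.range n := by simp
  rw [E, Finset.range_add_one, Finset.powersetCard_succ_insert hn, Finset.sum_union]
  · congr 1
    rw [Finset.sum_image]
    · rw [E, Finset.mul_sum]
      refine Finset.sum_congr rfl fun s hs => ?_
      have hns : n ∉ s := fun hns => hn ((Finset.mem_powersetCard.1 hs).1 hns)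
      rw [Finset.prod_insert hns]
    · intro s hs t ht hst
      have hns : n ∉ s := fun h' => hn ((Finset.mem_powersetCard.1 hs).1 h')
      have hnt : n ∉ t := fun h' => hn ((Finset.mem_powersetCard.1 ht).1 h')
      have : (insert n s).erase n = (insert n t).erase n := by rw [hst]
      rwa [Finset.erase_insert hns, Finset.erase_insert hnt] at this
  · rw [Finset.disjoint_left]
    intro s hs hs'
    have := (Finset.mem_powersetCard.1 hs).1
    obtain ⟨t, ht, rfl⟩ := Finset.mem_image.1 hs'
    exact hn (this (Finset.mem_insert_self n t))

lemma qBracket_eq (n : ℕ) : qBracket n = φ (∑ i ∈ Finset.range n, X ^ i) := by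
  simp [qBracket, qq, map_sum, map_pow]

lemma qBracket_ne_zero (n : ℕ) (h : 1 ≤ n) : qBracket n ≠ 0 := by
  rw [qBracket_eq]
  intro hzero
  have h0 : (∑ i ∈ Finset.range n, (X : Polynomial ℤ) ^ i) = 0 :=
    IsFractionRing.injective (Polynomial ℤ) (FractionRing (Polynomial ℤ)) (by simpa using hzero)
  have := congrArg (Polynomial.eval 1) h0
  simp at this
  omega

lemma qFactorial_succ (n : ℕ) : qFactorial (n+1) = qFactorial n * qBracket (n+1) := by
  rw [qFactorial, Finset.prod_range_succ, qFactorial]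

lemma qFactorial_zero : qFactorial 0 = 1 := by simp [qFactorial]

lemma qFactorial_ne_zero (n : ℕ) : qFactorial n ≠ 0 := by
  induction n with
  | zero => simp [qFactorial]
  | succ n ih =>
    rw [qFactorial_succ]
    exact mul_ne_zero ih (qBracket_ne_zero _ (Nat.succ_le_succ (Nat.zero_le _)))

lemma qBracket_add (a b : ℕ) : qBracket (a + b) = qBracket a + qq ^ a * qBracket b := by
  rw [qBracket, qBracket, qBracket, Finset.sum_range_add, Finset.mul_sum]
  congr 1
  exact Finset.sum_congr rfl fun i _ => (pow_add qq a i)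

lemma key : ∀ n k : ℕ, k ≤ n →
    φ (E n k) * (qFactorial (n - k) * qFactorial k) = qq ^ (k * (k-1) / 2) * qFactorial n := by
  intro n
  induction n with
  | zero =>
    intro k hk
    interval_cases k
    simp [E_zero, qFactorial_zero]
  | succ n ih =>
    intro k hk
    have hφX : φ X = qq := rfl
    match k with
    | 0 => simp [E_zero, qFactorial_zero]
    | k + 1 =>
      rw [E_succ, map_add, map_mul, map_pow, hφX]
      rcases Nat.lt_or_ge k n with hkn | hkn
      · -- k + 1 ≤ n
        obtain ⟨m, hm⟩ : ∃ m, n = m + k + 1 := ⟨n - k - 1, by omega⟩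
        subst hm
        have h1 := ih (k+1) (by omega)
        have h2 := ih k (by omega)
        rw [show m + k + 1 - (k + 1) = m from by omega] at h1
        rw [show m + k + 1 - k = m + 1 from by omega] at h2
        rw [show m + k + 1 + 1 - (k+1) = m + 1 from by omega]
        have ht : (k+1) * (k+1-1) / 2 = k * (k-1) / 2 + k := Nat.triangle_succ k
        have hpow : qq ^ (k * (k-1) / 2 + k) = qq ^ (k * (k-1) / 2) * qq ^ k := pow_add qq _ _
        have hqn : qq ^ (m + k + 1) = qq ^ (m+1) * qq ^ k := by
          rw [show m + k + 1 = (m+1) + k from by omega, pow_add]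
        have hF : qFactorial (m+k+1+1)
            = qFactorial (m+k+1) * (qBracket (m+1) + qq^(m+1) * qBracket (k+1)) := by
          rw [qFactorial_succ (m+k+1), ← qBracket_add]
          congr 2
          omega
        rw [ht, hpow, hqn, hF, qFactorial_succ m, qFactorial_succ k]
        rw [ht, hpow, qFactorial_succ k] at h1
        rw [qFactorial_succ m] at h2
        linear_combination qBracket (m+1) * h1 + qq^(m+1) * qq^k * qBracket (k+1) * h2
      · -- k = n
        have hkn' : k = n := by omega
        subst hkn'
        have h1 := ih k le_rfl
        rw [Nat.sub_self, qFactorial_zero, one_mul] at h1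
        have hEkk : φ (E k k) = qq ^ (k * (k-1) / 2) :=
          mul_right_cancel₀ (qFactorial_ne_zero k) h1
        rw [E_gt k (k+1) (by omega), map_zero, zero_add, Nat.sub_self, qFactorial_zero,
          Nat.triangle_succ, pow_add, qFactorial_succ k, hEkk]
        ring


/-- For `1 ≤ n` and `k ≤ n`, the evaluation of the `k`-th elementary symmetric
polynomial in `n` variables at `1, q, q², ..., q^(n-1)` equals
`q^(k(k-1)/2)` times the Gaussian binomial coefficient `binom(n,k)_q`, in `ℤ[q]`. -/
theorem esymm_q_powers (B : ℕ → ℕ → Polynomial ℤ)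
    (hB : ∀ n k : ℕ, k ≤ n →
      algebraMap (Polynomial ℤ) (FractionRing (Polynomial ℤ)) (B n k) =
        qFactorial n / (qFactorial (n - k) * qFactorial k))
    (n k : ℕ) (hn : 1 ≤ n) (hk : k ≤ n) :
    ∑ s ∈ (Finset.range n).powersetCard k, ∏ i ∈ s, (Polynomial.X : Polynomial ℤ) ^ i =
      Polynomial.X ^ (k * (k - 1) / 2) * B n k := by
  apply IsFractionRing.injective (Polynomial ℤ) (FractionRing (Polynomial ℤ))
  rw [map_mul, map_pow, hB n k hk]
  have hden : qFactorial (n - k) * qFactorial k ≠ 0 :=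
    mul_ne_zero (qFactorial_ne_zero _) (qFactorial_ne_zero _)
  have hφX : φ X = qq := rfl
  show φ (E n k) = _
  rw [hφX, ← mul_div_assoc, eq_div_iff hden]
  exact key n k hk
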